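/- Second system of q-difference equations for F (equation (12), with operator ordering made explicit): let q, a_1,…,a_N, b_1,…,b_M, c_1,…,c_N be complex numbers, |q| < 1, with (c_j;q)_n ≠ 0 for all j, n, and let G(y) = F_{N,M}({a_j},{b_i};{c_j};y) for y in the open unit polydisc in ℂ^M, where the defining multi-series is assumed absolutely summable on this polydisc. For 1 ≤ r < s ≤ M and every y in the polydisc: y_r · [(1 − b_r T_{y_r}) ∘ (1 − T_{y_s})] applied to G, evaluated at y, equals y_s · [(1 − b_s T_{y_s}) ∘ (1 − T_{y_r})] applied to G, evaluated at y, where T_{y_i} replaces y_i by q y_i. -/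

import Mathlib

open scoped BigOperators

noncomputable def qPoch (q a : ℂ) (n : ℕ) : ℂ :=
  ∏ k ∈ Finset.range n, (1 - q ^ k * a)

noncomputable def qPochInf (q a : ℂ) : ℂ :=
  ∏' k : ℕ, (1 - q ^ k * a)

/-- The generalized `q`-hypergeometric series `F_{N,M}` with upper parameters `a`,
`b`-type parameters `b`, lower parameters `c` and variables `y`. -/
noncomputable def qHyperF (q : ℂ) {N M : ℕ} (a : Fin N → ℂ) (b : Fin M → ℂ)
    (c : Fin N → ℂ) (y : Fin M → ℂ) : ℂ :=
  ∑' m : Fin M → ℕ,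
    (∏ j, qPoch q (a j) (∑ i, m i) / qPoch q (c j) (∑ i, m i)) *
      (∏ i, qPoch q (b i) (m i) / qPoch q q (m i)) * ∏ i, y i ^ m i


/-- `T_{y_s}` : the `q`-shift operator in the variable `y_s` only. -/
noncomputable def qShiftAt (q : ℂ) {M : ℕ} (s : Fin M) (f : (Fin M → ℂ) → ℂ) :
    (Fin M → ℂ) → ℂ :=
  fun y => f (Function.update y s (q * y s))

/-- The operator `1 - α T_{y_s}`. -/
noncomputable def opAt (q α : ℂ) {M : ℕ} (s : Fin M) (f : (Fin M → ℂ) → ℂ) :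
    (Fin M → ℂ) → ℂ :=
  fun y => f y - α * qShiftAt q s f y

/-!
Write `F = ∑ φ(m) y^m`. The operator `1 - α T_{y_s}` multiplies the coefficient `φ(m)` by
`1 - α q^{m_s}`, so the left-hand side is `y_r ∑ (1 - b_r q^{m_r}) (1 - q^{m_s}) φ(m) y^m`.
The factor `1 - q^{m_s}` kills the terms with `m_s = 0`; shifting `m_s ↦ m_s + 1` in the others,
the contiguous relation
`φ(m + e_s) (1 - q^{m_s+1}) = φ(m) (1 - b_s q^{m_s}) ∏_j (1 - q^{|m|} a_j) / (1 - q^{|m|} c_j)`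
turns it into `y_r y_s ∑ (1 - b_r q^{m_r}) (1 - b_s q^{m_s}) ∏_j (…) φ(m) y^m`,
which is symmetric in `r` and `s`.
-/

open Function Metric

section Update

variable {ι : Type*} [DecidableEq ι]

lemma tsum_eq_tsum_update_succ {α : Type*} [AddCommMonoid α] [TopologicalSpace α]
    (s : ι) (f : (ι → ℕ) → α) (hf : ∀ m, m s = 0 → f m = 0) :
    ∑' m, f m = ∑' m, f (update m s (m s + 1)) := by
  have hinj : Injective fun m : ι → ℕ => update m s (m s + 1) :=
    LeftInverse.injective (g := fun m => update m s (m s - 1)) fun m => by simp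
  refine (hinj.tsum_eq fun m hm => ⟨update m s (m s - 1), ?_⟩).symm
  have hms : m s ≠ 0 := fun h => hm (hf m h)
  simp [Nat.sub_add_cancel (Nat.pos_of_ne_zero hms)]

variable [Fintype ι]

@[to_additive]
lemma Finset.prod_univ_apply_update {M : Type*} [CommMonoid M] {β : ι → Type*}
    (F : ∀ i, β i → M) (m : ∀ i, β i) (s : ι) (v : β s) :
    ∏ i, F i (update m s v i) = F s v * ∏ i ∈ Finset.univ.erase s, F i (m i) := by
  simp_rw [apply_update F, Finset.prod_update_of_mem (Finset.mem_univ s),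
    Finset.sdiff_singleton_eq_erase]

lemma prod_update_mul_pow {R : Type*} [CommMonoid R] (y : ι → R) (m : ι → ℕ) (s : ι) (q : R) :
    ∏ i, update y s (q * y s) i ^ m i = q ^ m s * ∏ i, y i ^ m i := by
  rw [Finset.prod_univ_apply_update (fun i x => x ^ m i), mul_pow, mul_assoc,
    Finset.mul_prod_erase _ (fun i => y i ^ m i) (Finset.mem_univ s)]

lemma prod_pow_update_succ {R : Type*} [CommMonoid R] (y : ι → R) (m : ι → ℕ) (s : ι) :
    ∏ i, y i ^ update m s (m s + 1) i = y s * ∏ i, y i ^ m i := by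
  rw [Finset.prod_univ_apply_update (fun i k => y i ^ k), pow_succ', mul_assoc,
    Finset.mul_prod_erase _ (fun i => y i ^ m i) (Finset.mem_univ s)]

lemma sum_update_succ (m : ι → ℕ) (s : ι) :
    ∑ i, update m s (m s + 1) i = ∑ i, m i + 1 := by
  rw [Finset.sum_univ_apply_update (fun _ k => k), ← Finset.add_sum_erase _ m (Finset.mem_univ s)]
  ring

lemma norm_update_mul_le {𝕜 : Type*} [SeminormedRing 𝕜] {q : 𝕜} (hq : ‖q‖ ≤ 1) (y : ι → 𝕜)
    (s : ι) : ‖update y s (q * y s)‖ ≤ ‖y‖ := by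
  refine (pi_norm_le_iff_of_nonneg (norm_nonneg y)).2 fun i => ?_
  rcases eq_or_ne i s with rfl | hi
  · rw [update_self]
    calc ‖q * y i‖ ≤ ‖q‖ * ‖y i‖ := norm_mul_le _ _
      _ ≤ ‖y i‖ := mul_le_of_le_one_left (norm_nonneg _) hq
      _ ≤ ‖y‖ := norm_le_pi_norm y i
  · rw [update_of_ne hi]
    exact norm_le_pi_norm y i

end Update

section MvSeries

variable {σ : Type*} [Fintype σ]

noncomputable def mvSeries (φ : (σ → ℕ) → ℂ) (y : σ → ℂ) : ℂ :=
  ∑' m, φ m * ∏ i, y i ^ m i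

lemma summable_norm_mul_coeff {φ w : (σ → ℕ) → ℂ} {y : σ → ℂ} {C : ℝ}
    (hφ : Summable fun m => ‖φ m * ∏ i, y i ^ m i‖) (hw : ∀ m, ‖w m‖ ≤ C) :
    Summable fun m => ‖w m * φ m * ∏ i, y i ^ m i‖ := by
  refine (hφ.mul_left C).of_nonneg_of_le (fun _ => norm_nonneg _) fun m => ?_
  rw [mul_assoc, norm_mul]
  exact mul_le_mul_of_nonneg_right (hw m) (norm_nonneg _)

end MvSeries

lemma norm_one_sub_mul_pow_le {q : ℂ} (hq : ‖q‖ ≤ 1) (α : ℂ) (k : ℕ) :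
    ‖1 - α * q ^ k‖ ≤ 1 + ‖α‖ := by
  calc ‖1 - α * q ^ k‖ ≤ ‖(1 : ℂ)‖ + ‖α‖ * ‖q‖ ^ k := by
        rw [← norm_pow, ← norm_mul]; exact norm_sub_le _ _
    _ ≤ 1 + ‖α‖ := by
        rw [norm_one]
        gcongr
        exact mul_le_of_le_one_right (norm_nonneg _) (pow_le_one₀ (norm_nonneg _) hq)

section Operators

variable {M : ℕ} {q : ℂ}

lemma qShiftAt_mvSeries (s : Fin M) (φ : (Fin M → ℕ) → ℂ) (y : Fin M → ℂ) :
    qShiftAt q s (mvSeries φ) y = mvSeries (fun m => q ^ m s * φ m) y := by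
  simp only [qShiftAt, mvSeries, prod_update_mul_pow]
  exact tsum_congr fun m => by ring

lemma opAt_mvSeries (hq : ‖q‖ ≤ 1) (α : ℂ) (s : Fin M) {φ : (Fin M → ℕ) → ℂ} {y : Fin M → ℂ}
    (hφ : Summable fun m => ‖φ m * ∏ i, y i ^ m i‖) :
    opAt q α s (mvSeries φ) y = mvSeries (fun m => (1 - α * q ^ m s) * φ m) y := by
  have hshift : Summable fun m => q ^ m s * φ m * ∏ i, y i ^ m i :=
    (summable_norm_mul_coeff hφ fun m => by
      rw [norm_pow]; exact pow_le_one₀ (norm_nonneg _) hq).of_norm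
  rw [opAt, qShiftAt_mvSeries, mvSeries, mvSeries, mvSeries, ← tsum_mul_left,
    ← hφ.of_norm.tsum_sub (hshift.mul_left α)]
  exact tsum_congr fun m => by ring

variable {ρ : ℝ}

lemma Set.EqOn.opAt (hq : ‖q‖ ≤ 1) (α : ℂ) (s : Fin M) {f g : (Fin M → ℂ) → ℂ}
    (h : Set.EqOn f g (ball 0 ρ)) : Set.EqOn (opAt q α s f) (opAt q α s g) (ball 0 ρ) :=
  fun y hy => by
    have hy' : update y s (q * y s) ∈ ball 0 ρ :=
      mem_ball_zero_iff.2 ((norm_update_mul_le hq y s).trans_lt (mem_ball_zero_iff.1 hy))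
    simp only [_root_.opAt, qShiftAt, h hy, h hy']

lemma opAt_opAt_mvSeries (hq : ‖q‖ ≤ 1) (α β : ℂ) (r s : Fin M) {φ : (Fin M → ℕ) → ℂ}
    (hφ : ∀ y ∈ ball (0 : Fin M → ℂ) ρ, Summable fun m => ‖φ m * ∏ i, y i ^ m i‖)
    {y : Fin M → ℂ} (hy : y ∈ ball 0 ρ) :
    opAt q α r (opAt q β s (mvSeries φ)) y
      = mvSeries (fun m => (1 - α * q ^ m r) * ((1 - β * q ^ m s) * φ m)) y := by
  have hinner : Set.EqOn (opAt q β s (mvSeries φ))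
      (mvSeries fun m => (1 - β * q ^ m s) * φ m) (ball 0 ρ) :=
    fun z hz => opAt_mvSeries hq β s (hφ z hz)
  rw [hinner.opAt hq α r hy]
  exact opAt_mvSeries hq α r
    (summable_norm_mul_coeff (hφ y hy) fun m => norm_one_sub_mul_pow_le hq β (m s))

end Operators

lemma qPoch_succ (q x : ℂ) (n : ℕ) : qPoch q x (n + 1) = qPoch q x n * (1 - q ^ n * x) :=
  Finset.prod_range_succ _ _

lemma one_sub_pow_mul_self_ne_zero {q : ℂ} (hq : ‖q‖ < 1) (n : ℕ) : 1 - q ^ n * q ≠ 0 := by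
  rw [← pow_succ, sub_ne_zero]
  intro h
  exact (pow_lt_one₀ (norm_nonneg q) hq n.succ_ne_zero).ne (by rw [← norm_pow, ← h, norm_one])

lemma qPoch_div_qPoch_self_succ {q : ℂ} (hq : ‖q‖ < 1) (x : ℂ) (n : ℕ) :
    qPoch q x (n + 1) / qPoch q q (n + 1) * (1 - q ^ n * q)
      = qPoch q x n / qPoch q q n * (1 - q ^ n * x) := by
  rw [qPoch_succ, qPoch_succ, mul_div_mul_comm, mul_assoc,
    div_mul_cancel₀ _ (one_sub_pow_mul_self_ne_zero hq n)]

section QHyper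

variable {ι σ : Type*} [Fintype ι] [Fintype σ] (q : ℂ) (a c : ι → ℂ) (b : σ → ℂ)

noncomputable def qHyperCoeff (m : σ → ℕ) : ℂ :=
  (∏ j, qPoch q (a j) (∑ i, m i) / qPoch q (c j) (∑ i, m i)) *
    ∏ i, qPoch q (b i) (m i) / qPoch q q (m i)

noncomputable def qHyperRatio (n : ℕ) : ℂ :=
  ∏ j, (1 - q ^ n * a j) / (1 - q ^ n * c j)

lemma qHyperF_eq_mvSeries {N M : ℕ} (a c : Fin N → ℂ) (b : Fin M → ℂ) :
    qHyperF q a b c = mvSeries (qHyperCoeff q a c b) :=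
  rfl

lemma prod_qPoch_div_qPoch_succ (n : ℕ) :
    ∏ j, qPoch q (a j) (n + 1) / qPoch q (c j) (n + 1)
      = (∏ j, qPoch q (a j) n / qPoch q (c j) n) * qHyperRatio q a c n := by
  rw [qHyperRatio, ← Finset.prod_mul_distrib]
  exact Finset.prod_congr rfl fun j _ => by rw [qPoch_succ, qPoch_succ, mul_div_mul_comm]

variable [DecidableEq σ] {q}

lemma qHyperCoeff_update_succ (hq : ‖q‖ < 1) (m : σ → ℕ) (s : σ) :
    qHyperCoeff q a c b (update m s (m s + 1)) * (1 - q ^ m s * q)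
      = qHyperCoeff q a c b m * qHyperRatio q a c (∑ i, m i) * (1 - q ^ m s * b s) := by
  set B : σ → ℕ → ℂ := fun i k => qPoch q (b i) k / qPoch q q k
  have hB := qPoch_div_qPoch_self_succ hq (b s) (m s)
  have hrest := Finset.mul_prod_erase Finset.univ (fun i => B i (m i)) (Finset.mem_univ s)
  simp only [qHyperCoeff, sum_update_succ, prod_qPoch_div_qPoch_succ]
  rw [Finset.prod_univ_apply_update B, ← hrest]
  linear_combination (∏ j, qPoch q (a j) (∑ i, m i) / qPoch q (c j) (∑ i, m i)) *
    qHyperRatio q a c (∑ i, m i) * (∏ i ∈ Finset.univ.erase s, B i (m i)) * hB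

lemma mul_mvSeries_one_sub_qHyperCoeff_eq (hq : ‖q‖ < 1) {r s : σ} (hrs : r ≠ s) (y : σ → ℂ) :
    y r * mvSeries (fun m => (1 - b r * q ^ m r) * ((1 - q ^ m s) * qHyperCoeff q a c b m)) y
      = y r * y s * ∑' m, (1 - b r * q ^ m r) * (1 - b s * q ^ m s) *
          qHyperRatio q a c (∑ i, m i) * (qHyperCoeff q a c b m * ∏ i, y i ^ m i) := by
  have hvanish : ∀ m : σ → ℕ, m s = 0 →
      (1 - b r * q ^ m r) * ((1 - q ^ m s) * qHyperCoeff q a c b m) * ∏ i, y i ^ m i = 0 :=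
    fun m h => by simp [h]
  rw [mvSeries, tsum_eq_tsum_update_succ s _ hvanish, mul_assoc]
  simp only [← tsum_mul_left]
  refine tsum_congr fun m => ?_
  have hcoeff := qHyperCoeff_update_succ a c b hq m s
  simp only [update_of_ne hrs, update_self, prod_pow_update_succ]
  rw [pow_succ]
  linear_combination y r * y s * (1 - b r * q ^ m r) * (∏ i, y i ^ m i) * hcoeff

end QHyper

theorem statement5_general (M N : ℕ) (q : ℂ) (a c : Fin N → ℂ) (b : Fin M → ℂ)
    (hq : ‖q‖ < 1)
    (hsum : ∀ y : Fin M → ℂ, (∀ i, ‖y i‖ < 1) →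
      Summable (fun m : Fin M → ℕ =>
        ‖(∏ j, qPoch q (a j) (∑ i, m i) / qPoch q (c j) (∑ i, m i)) *
          (∏ i, qPoch q (b i) (m i) / qPoch q q (m i)) * ∏ i, y i ^ m i‖))
    (r s : Fin M) (hrs : r < s) (y : Fin M → ℂ) (hy : ∀ i, ‖y i‖ < 1) :
    y r * opAt q (b r) r (opAt q 1 s (qHyperF q a b c)) y
      = y s * opAt q (b s) s (opAt q 1 r (qHyperF q a b c)) y := by
  have mem_ball_iff (z : Fin M → ℂ) : z ∈ ball 0 1 ↔ ∀ i, ‖z i‖ < 1 := by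
    rw [mem_ball_zero_iff, pi_norm_lt_iff one_pos]
  have hφ : ∀ z ∈ ball (0 : Fin M → ℂ) 1,
      Summable fun m => ‖qHyperCoeff q a c b m * ∏ i, z i ^ m i‖ :=
    fun z hz => hsum z ((mem_ball_iff z).1 hz)
  have hy' : y ∈ ball 0 1 := (mem_ball_iff y).2 hy
  rw [qHyperF_eq_mvSeries, opAt_opAt_mvSeries hq.le _ _ _ _ hφ hy',
    opAt_opAt_mvSeries hq.le _ _ _ _ hφ hy']
  simp only [one_mul]
  rw [mul_mvSeries_one_sub_qHyperCoeff_eq a c b hq hrs.ne,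
    mul_mvSeries_one_sub_qHyperCoeff_eq a c b hq hrs.ne', mul_comm (y s) (y r)]
  exact congrArg _ (tsum_congr fun m => by ring)

theorem statement5 (M N : ℕ) (q : ℂ) (a c : Fin N → ℂ) (b : Fin M → ℂ)
    (hq : ‖q‖ < 1)
    (hc : ∀ j n, qPoch q (c j) n ≠ 0)
    (hsum : ∀ y : Fin M → ℂ, (∀ i, ‖y i‖ < 1) →
      Summable (fun m : Fin M → ℕ =>
        ‖(∏ j, qPoch q (a j) (∑ i, m i) / qPoch q (c j) (∑ i, m i)) *
          (∏ i, qPoch q (b i) (m i) / qPoch q q (m i)) * ∏ i, y i ^ m i‖))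
    (r s : Fin M) (hrs : r < s) (y : Fin M → ℂ) (hy : ∀ i, ‖y i‖ < 1) :
    y r * opAt q (b r) r (opAt q 1 s (qHyperF q a b c)) y
      = y s * opAt q (b s) s (opAt q 1 r (qHyperF q a b c)) y :=
  statement5_general M N q a c b hq hsum r s hrs y hy
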